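/- arXiv:0909.3755 — 3 statements merged into one kernel-verified Lean document; each statement's English description precedes it below -/
import Mathlib

section
/- There is no skew-symmetric amorphous association scheme with at least 4 classes: for every d ≥ 4, every n ≥ 1, and every family A_0, A_1, …, A_d of n×n real matrices forming an association scheme with d classes, if the scheme is skew-symmetric then it is not amorphous. -/
open Matrix BigOperators

/-- An association scheme on `n` vertices, encoded as a family of `n × n`
real `0/1`-matrices indexed by `ι`: `e` is the index of the diagonal (identity)
relation and `σ` is the pairing sending each relation to its transpose.
All relations are nonempty, the identity relation is the identity matrix,
the relations partition `X × X` (the matrices sum to the all-ones matrix `J`),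
the family is closed under transposition, and products of the matrices are
nonnegative-integer linear combinations of the matrices. -/
def IsAssocScheme {ι : Type} [Fintype ι] (n : ℕ)
    (A : ι → Matrix (Fin n) (Fin n) ℝ) (e : ι) (σ : ι → ι) : Prop :=
  (∀ i, A i ≠ 0) ∧
  (∀ i x y, A i x y = 0 ∨ A i x y = 1) ∧
  A e = 1 ∧
  (∑ i, A i) = Matrix.of (fun _ _ => (1 : ℝ)) ∧
  (∀ i, (A i)ᵀ = A (σ i)) ∧
  (∀ i j, ∃ p : ι → ℕ, A i * A j = ∑ k, (p k : ℝ) • A k)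

/-- `Λ` is a partition of the index set `ι`: its blocks are nonempty and every
index lies in exactly one block. -/
def IsPartition {ι : Type} [Fintype ι] [DecidableEq ι]
    (Λ : Finset (Finset ι)) : Prop :=
  (∀ C ∈ Λ, C.Nonempty) ∧ ∀ i : ι, ∃! C, C ∈ Λ ∧ i ∈ C

/-- A partition `Λ` of the index set is admissible (for a scheme with diagonal
index `e` and transpose pairing `σ`) if `{e}` is a block of `Λ` and the image
of every block under the pairing `σ` is again a block. -/
def Admissible {ι : Type} [Fintype ι] [DecidableEq ι]
    (e : ι) (σ : ι → ι) (Λ : Finset (Finset ι)) : Prop :=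
  ({e} : Finset ι) ∈ Λ ∧ ∀ C ∈ Λ, C.image σ ∈ Λ

/-- The partition `Λ` gives rise to a fusion scheme: the block sums
`B_C = ∑_{i ∈ C} A_i`, indexed by the blocks of `Λ`, again form an
association scheme, with diagonal block `{e}`. -/
def GivesFusion {ι : Type} [Fintype ι] [DecidableEq ι] (n : ℕ)
    (A : ι → Matrix (Fin n) (Fin n) ℝ) (e : ι) (Λ : Finset (Finset ι)) : Prop :=
  ∃ (E : {C // C ∈ Λ}) (σ' : {C // C ∈ Λ} → {C // C ∈ Λ}),
    (E : Finset ι) = {e} ∧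
    IsAssocScheme n (fun C : {C // C ∈ Λ} => ∑ i ∈ (C : Finset ι), A i) E σ'

/-- The scheme is amorphous: every admissible partition of the index set gives
rise to a fusion scheme. -/
def Amorphous {ι : Type} [Fintype ι] [DecidableEq ι] (n : ℕ)
    (A : ι → Matrix (Fin n) (Fin n) ℝ) (e : ι) (σ : ι → ι) : Prop :=
  ∀ Λ : Finset (Finset ι), IsPartition Λ → Admissible e σ Λ → GivesFusion n A e Λ

/-!
In a skew-symmetric scheme every valency is odd. For a relation `i`, the intersection numbers
`p_{iv}^i` sum to the valency `k_i`, and `p_{i0}^i = 1`; moreover `p_{iv}^i = p_{iv'}^i`, because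
`p_{iv}^i · tr (A_i A_iᵀ) = tr (A_i A_v A_iᵀ)` and transposing the product under the trace
replaces `A_v` by `A_{v'}`. As the pairing `v ↦ v'` fixes only `0`, `k_i ≡ 1 (mod 2)`.

With at least four classes there are two distinct pairs `{a, a'}` and `{b, b'}`. Merging `b` into
`a` and `b'` into `a'` is an admissible partition whose fusion is again skew-symmetric, so its
relation `A_a + A_b` would have odd valency; but that valency is `k_a + k_b`, a sum of two odd
numbers.
-/

/-- Skew-symmetry, phrased through the pairing: only the diagonal relation is self-paired. -/
def IsSkew {ι : Type} (σ : ι → ι) (e : ι) : Prop :=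
  ∀ j, σ j = j → j = e

theorem sum_zmod_two_eq_of_involutive {ι : Type} [Fintype ι] [DecidableEq ι] {σ : ι → ι}
    (hσ : Function.Involutive σ) {e : ι} (hfix : ∀ j, σ j = j ↔ j = e) {f : ι → ZMod 2}
    (hf : ∀ j, f (σ j) = f j) : ∑ j, f j = f e := by
  rw [← Finset.add_sum_erase _ _ (Finset.mem_univ e), add_eq_left]
  refine Finset.sum_involution (fun j _ => σ j) (fun j _ => by rw [hf, CharTwo.add_self_eq_zero])
    (fun j hj _ h => Finset.ne_of_mem_erase hj ((hfix j).1 h)) (fun j hj => ?_) (fun j _ => hσ j)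
  refine Finset.mem_erase.2 ⟨fun h => Finset.ne_of_mem_erase hj ?_, Finset.mem_univ _⟩
  rw [← hσ j, h, (hfix e).2 rfl]

namespace IsAssocScheme

variable {ι : Type} [Fintype ι] {n : ℕ} {A : ι → Matrix (Fin n) (Fin n) ℝ} {e : ι} {σ : ι → ι}

theorem sum_apply_eq_one (hA : IsAssocScheme n A e σ) (x y : Fin n) : ∑ m, A m x y = 1 := by
  simpa [Matrix.sum_apply] using congrFun₂ hA.2.2.2.1 x y

theorem apply_nonneg (hA : IsAssocScheme n A e σ) (m : ι) (x y : Fin n) : 0 ≤ A m x y := by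
  rcases hA.2.1 m x y with h | h <;> simp [h]

theorem apply_eq_zero_of_ne (hA : IsAssocScheme n A e σ) {u v : ι} {x y : Fin n}
    (hu : A u x y = 1) (hvu : v ≠ u) : A v x y = 0 := by
  classical
  have hpair : A u x y + A v x y ≤ ∑ m, A m x y := by
    rw [← Finset.sum_pair (f := fun m => A m x y) hvu.symm]
    exact Finset.sum_le_sum_of_subset_of_nonneg (Finset.subset_univ _)
      fun m _ _ => hA.apply_nonneg m x y
  linarith [hA.sum_apply_eq_one x y, hA.apply_nonneg v x y]

theorem exists_apply_eq_one (hA : IsAssocScheme n A e σ) (u : ι) : ∃ x y, A u x y = 1 := by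
  by_contra! h
  exact hA.1 u (Matrix.ext fun x y => (hA.2.1 u x y).resolve_right (h x y))

theorem injective (hA : IsAssocScheme n A e σ) : Function.Injective A := by
  intro u v huv
  by_contra hne
  obtain ⟨x, y, hu⟩ := hA.exists_apply_eq_one u
  have hv := hA.apply_eq_zero_of_ne hu (Ne.symm hne)
  rw [← huv, hu] at hv
  exact one_ne_zero hv

theorem involutive (hA : IsAssocScheme n A e σ) : Function.Involutive σ := fun u =>
  hA.injective (by rw [← hA.2.2.2.2.1, ← hA.2.2.2.2.1, Matrix.transpose_transpose])

theorem map_e (hA : IsAssocScheme n A e σ) : σ e = e :=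
  hA.injective (by rw [← hA.2.2.2.2.1, hA.2.2.1, Matrix.transpose_one])

theorem map_eq_self_iff (hA : IsAssocScheme n A e σ) (hskew : IsSkew σ e) (j : ι) :
    σ j = j ↔ j = e :=
  ⟨hskew j, fun h => h ▸ hA.map_e⟩

theorem sum_smul_apply (hA : IsAssocScheme n A e σ) (c : ι → ℝ) {u : ι} {x y : Fin n}
    (hu : A u x y = 1) : (∑ m, c m • A m) x y = c u := by
  rw [Matrix.sum_apply,
    Finset.sum_eq_single u (fun m _ hm => by simp [hA.apply_eq_zero_of_ne hu hm]) (by simp)]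
  simp [hu]

theorem sum_apply_of_apply_eq_one [DecidableEq ι] (hA : IsAssocScheme n A e σ) (s : Finset ι)
    {u : ι} {x y : Fin n} (hu : A u x y = 1) : (∑ m ∈ s, A m) x y = if u ∈ s then 1 else 0 := by
  rw [Matrix.sum_apply, ← Finset.sum_ite_eq' s u fun _ => (1 : ℝ)]
  refine Finset.sum_congr rfl fun m _ => ?_
  split_ifs with h
  · rwa [h]
  · exact hA.apply_eq_zero_of_ne hu h

theorem injective_sum [DecidableEq ι] (hA : IsAssocScheme n A e σ) :
    Function.Injective fun s : Finset ι => ∑ m ∈ s, A m := by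
  intro s t hst
  ext u
  obtain ⟨x, y, hu⟩ := hA.exists_apply_eq_one u
  have := congrFun₂ hst x y
  simp only [hA.sum_apply_of_apply_eq_one _ hu] at this
  split_ifs at this <;> simp_all

theorem transpose_sum [DecidableEq ι] (hA : IsAssocScheme n A e σ) (s : Finset ι) :
    (∑ m ∈ s, A m)ᵀ = ∑ m ∈ s.image σ, A m := by
  rw [Matrix.transpose_sum, Finset.sum_image fun u _ v _ h => hA.involutive.injective h]
  simp only [hA.2.2.2.2.1]

theorem trace_mul_transpose_of_ne (hA : IsAssocScheme n A e σ) {m i : ι} (hmi : m ≠ i) :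
    trace (A m * (A i)ᵀ) = 0 := by
  rw [← sum_hadamard_eq]
  refine Finset.sum_eq_zero fun x _ => Finset.sum_eq_zero fun y _ => ?_
  rcases hA.2.1 i x y with h | h
  · simp [h]
  · simp [hA.apply_eq_zero_of_ne h hmi]

theorem trace_mul_transpose_self_ne_zero (hA : IsAssocScheme n A e σ) (i : ι) :
    trace (A i * (A i)ᵀ) ≠ 0 := by
  rw [← conjTranspose_eq_transpose_of_trivial, Ne, trace_mul_conjTranspose_self_eq_zero_iff]
  exact hA.1 i

theorem trace_sum_smul_mul_transpose (hA : IsAssocScheme n A e σ) (c : ι → ℝ) (i : ι) :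
    trace ((∑ m, c m • A m) * (A i)ᵀ) = c i * trace (A i * (A i)ᵀ) := by
  simp only [Finset.sum_mul, trace_sum, smul_mul_assoc, trace_smul, smul_eq_mul]
  exact Finset.sum_eq_single i (fun m _ hm => by rw [hA.trace_mul_transpose_of_ne hm, mul_zero])
    (by simp)

theorem exists_valency (hA : IsAssocScheme n A e σ) (i : ι) :
    ∃ k : ℕ, ∀ x, ∑ y, A i x y = k := by
  choose p hp using hA.2.2.2.2.2 i
  refine ⟨∑ v, p v e, fun x => ?_⟩
  have hJ : A i * ∑ v, A v = ∑ m, ((∑ v, p v m : ℕ) : ℝ) • A m := by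
    simp only [Finset.mul_sum, hp, Nat.cast_sum, Finset.sum_smul]
    exact Finset.sum_comm
  have hxx := congrFun₂ hJ x x
  rw [hA.sum_smul_apply (u := e) _ (by simp [hA.2.2.1]), hA.2.2.2.1, mul_apply] at hxx
  simpa using hxx

theorem mul_sum_eq_of_valency (hA : IsAssocScheme n A e σ) {i : ι} {k : ℕ}
    (hk : ∀ x, ∑ y, A i x y = k) : A i * ∑ m, A m = ∑ m, (k : ℝ) • A m := by
  rw [← Finset.smul_sum, hA.2.2.2.1]
  ext x y
  simp [mul_apply, hk]

theorem odd_valency [DecidableEq ι] (hA : IsAssocScheme n A e σ) (hskew : IsSkew σ e) {i : ι}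
    {k : ℕ} (hk : ∀ x, ∑ y, A i x y = k) : Odd k := by
  choose p hp using hA.2.2.2.2.2 i
  have hS := hA.trace_mul_transpose_self_ne_zero i
  have hcoef (v : ι) : trace (A i * A v * (A i)ᵀ) = p v i * trace (A i * (A i)ᵀ) := by
    rw [hp]
    exact hA.trace_sum_smul_mul_transpose _ i
  have hsymm (v : ι) : p (σ v) i = p v i := by
    have h : trace (A i * A (σ v) * (A i)ᵀ) = trace (A i * A v * (A i)ᵀ) := by
      rw [← hA.2.2.2.2.1, ← trace_transpose]
      simp only [transpose_mul, transpose_transpose, mul_assoc]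
    rw [hcoef, hcoef] at h
    exact_mod_cast mul_right_cancel₀ hS h
  have hpe : p e i = 1 := by
    have h := hcoef e
    rw [hA.2.2.1, mul_one, eq_comm, mul_eq_right₀ hS] at h
    exact_mod_cast h
  have hsum : ∑ v, p v i = k := by
    have h := congrArg (fun X => trace (X * (A i)ᵀ)) (hA.mul_sum_eq_of_valency hk)
    rw [hA.trace_sum_smul_mul_transpose] at h
    simp only [Finset.mul_sum, Finset.sum_mul, trace_sum, hcoef] at h
    rw [← Finset.sum_mul] at h
    exact_mod_cast mul_right_cancel₀ hS h
  have hk2 : (k : ZMod 2) = 1 := by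
    rw [← hsum, Nat.cast_sum, sum_zmod_two_eq_of_involutive hA.involutive (hA.map_eq_self_iff hskew)
      (f := fun v => (p v i : ZMod 2)) fun v => by rw [hsymm], hpe, Nat.cast_one]
  exact ZMod.natCast_eq_one_iff_odd.1 hk2

theorem isSkew_fusion [DecidableEq ι] (hA : IsAssocScheme n A e σ)
    {Λ : Finset (Finset ι)} (hΛ : ∀ C ∈ Λ, C.image σ = C → C = {e}) {E : {C // C ∈ Λ}}
    {σ' : {C // C ∈ Λ} → {C // C ∈ Λ}} (hE : (E : Finset ι) = {e})
    (hB : IsAssocScheme n (fun C : {C // C ∈ Λ} => ∑ i ∈ (C : Finset ι), A i) E σ') :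
    IsSkew σ' E := by
  intro C hC
  have h := hB.2.2.2.2.1 C
  rw [hC, hA.transpose_sum] at h
  exact Subtype.ext ((hΛ C C.2 (hA.injective_sum h)).trans hE.symm)

end IsAssocScheme

section Fibers

variable {ι κ : Type} [Fintype ι] [DecidableEq κ]

def fiber (g : ι → κ) (c : ι) : Finset ι :=
  Finset.univ.filter fun x => g x = g c

def fibers [DecidableEq ι] (g : ι → κ) : Finset (Finset ι) :=
  Finset.univ.image (fiber g)

@[simp]
theorem mem_fiber {g : ι → κ} {c x : ι} : x ∈ fiber g c ↔ g x = g c := by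
  simp [fiber]

theorem fiber_eq_fiber_iff {g : ι → κ} {c c' : ι} : fiber g c = fiber g c' ↔ g c = g c' := by
  refine ⟨fun h => mem_fiber.1 (h ▸ mem_fiber.2 rfl), fun h => ?_⟩
  ext x
  simp [h]

theorem fiber_eq_singleton [DecidableEq ι] {g : ι → κ} {e : ι} (he : ∀ c, g c = g e → c = e) :
    fiber g e = {e} := by
  ext x
  exact ⟨fun hx => Finset.mem_singleton.2 (he x (mem_fiber.1 hx)),
    fun hx => mem_fiber.2 (by rw [Finset.mem_singleton.1 hx])⟩

theorem isPartition_fibers [DecidableEq ι] (g : ι → κ) : IsPartition (fibers g) := by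
  refine ⟨?_, fun i => ⟨fiber g i, ⟨Finset.mem_image_of_mem _ (Finset.mem_univ i), by simp⟩, ?_⟩⟩
  · simp only [fibers, Finset.mem_image, Finset.mem_univ, true_and, forall_exists_index]
    rintro _ c rfl
    exact ⟨c, by simp⟩
  · simp only [fibers, Finset.mem_image, Finset.mem_univ, true_and, and_imp, forall_exists_index]
    rintro _ c rfl hi
    exact fiber_eq_fiber_iff.2 (mem_fiber.1 hi).symm

theorem image_fiber [DecidableEq ι] {g : ι → κ} {σ : ι → ι} {τ : κ → κ}
    (hσ : Function.Involutive σ) (hg : Function.Semiconj g σ τ) (c : ι) :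
    (fiber g c).image σ = fiber g (σ c) := by
  ext y
  simp only [Finset.mem_image, mem_fiber]
  constructor
  · rintro ⟨x, hx, rfl⟩
    rw [hg, hg, hx]
  · intro hy
    exact ⟨σ y, by rw [hg, hy, ← hg, hσ], hσ y⟩

theorem admissible_fibers [DecidableEq ι] {g : ι → κ} {σ : ι → ι} {τ : κ → κ} {e : ι}
    (hσ : Function.Involutive σ) (hg : Function.Semiconj g σ τ) (he : ∀ c, g c = g e → c = e) :
    Admissible e σ (fibers g) := by
  refine ⟨fiber_eq_singleton he ▸ Finset.mem_image_of_mem _ (Finset.mem_univ e), ?_⟩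
  simp only [fibers, Finset.mem_image, Finset.mem_univ, true_and, forall_exists_index]
  rintro _ c rfl
  exact ⟨σ c, (image_fiber hσ hg c).symm⟩

theorem eq_singleton_of_mem_fibers_of_image_eq [DecidableEq ι] {g : ι → κ} {σ : ι → ι}
    {τ : κ → κ} {e : ι}
    (hσ : Function.Involutive σ) (hg : Function.Semiconj g σ τ) (he : ∀ c, g c = g e → c = e)
    (hfix : ∀ c, g (σ c) = g c → c = e) {C : Finset ι} (hC : C ∈ fibers g)
    (hCσ : C.image σ = C) : C = {e} := by
  obtain ⟨c, -, rfl⟩ := Finset.mem_image.1 hC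
  rw [image_fiber hσ hg, fiber_eq_fiber_iff] at hCσ
  rw [hfix c hCσ, fiber_eq_singleton he]

end Fibers

section MergePair

variable {ι : Type} [DecidableEq ι] {σ : ι → ι} {a b : ι}

def mergePair (σ : ι → ι) (a b : ι) (c : ι) : ι :=
  if c = b then a else if c = σ b then σ a else c

theorem semiconj_mergePair (hσ : Function.Involutive σ) (hb : σ b ≠ b) :
    Function.Semiconj (mergePair σ a b) σ σ := by
  intro c
  have := hσ a
  have := hσ b
  have := hσ c
  unfold mergePair
  split_ifs <;> grind

theorem mergePair_eq_iff {e : ι} (hσ : Function.Involutive σ) (he : σ e = e) (ha : a ≠ e)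
    (hb : b ≠ e) (c : ι) : mergePair σ a b c = e ↔ c = e := by
  have := hσ a
  have := hσ b
  unfold mergePair
  split_ifs <;> grind

theorem fiber_mergePair [Fintype ι] (hσ : Function.Involutive σ) (ha : σ a ≠ a) (hba : b ≠ a)
    (hbσa : b ≠ σ a) : fiber (mergePair σ a b) a = {a, b} := by
  have := hσ a
  have := hσ b
  ext c
  simp only [mem_fiber, mergePair, Finset.mem_insert, Finset.mem_singleton]
  split_ifs <;> grind

end MergePair

theorem no_skewSymmetric_amorphous_ge_four_classes_general
    (d : ℕ) (hd : 4 ≤ d) (n : ℕ)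
    (A : Fin (d + 1) → Matrix (Fin n) (Fin n) ℝ) (σ : Fin (d + 1) → Fin (d + 1))
    (hA : IsAssocScheme n A 0 σ)
    (hskew : ∀ i, (A i)ᵀ = A i ↔ i = 0) :
    ¬ Amorphous n A 0 σ := by
  classical
  intro hAm
  have hskew' : IsSkew σ 0 := fun j hj => (hskew j).1 (by rw [hA.2.2.2.2.1, hj])
  have hfix := hA.map_eq_self_iff hskew'
  have hσ := hA.involutive
  set a : Fin (d + 1) := ⟨1, by omega⟩
  have ha : a ≠ 0 := Fin.ne_of_val_ne one_ne_zero
  obtain ⟨b, -, hb⟩ := Finset.exists_mem_notMem_of_card_lt_card (s := {0, a, σ a})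
    (t := Finset.univ) <| Finset.card_le_three.trans_lt <| by
      rw [Finset.card_univ, Fintype.card_fin]; omega
  simp only [Finset.mem_insert, Finset.mem_singleton, not_or] at hb
  obtain ⟨hb0, hba, hbσa⟩ := hb
  set g := mergePair σ a b
  have hg := semiconj_mergePair (a := a) hσ (mt (hfix b).1 hb0)
  have hg0 := mergePair_eq_iff hσ hA.map_e ha hb0
  have hge : ∀ c, g c = g 0 → c = 0 := fun c h => (hg0 c).1 (h.trans ((hg0 0).2 rfl))
  obtain ⟨E, σ', hE, hB⟩ := hAm _ (isPartition_fibers g) (admissible_fibers hσ hg hge)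
  have hskewB := hA.isSkew_fusion (fun C hC => eq_singleton_of_mem_fibers_of_image_eq hσ hg hge
    (fun c h => (hg0 c).1 ((hfix _).1 ((hg c).symm.trans h))) hC) hE hB
  obtain ⟨ka, hka⟩ := hA.exists_valency a
  obtain ⟨kb, hkb⟩ := hA.exists_valency b
  have hga : fiber g a = {a, b} := fiber_mergePair hσ (mt (hfix a).1 ha) hba hbσa
  have hodd := hB.odd_valency hskewB
    (i := ⟨fiber g a, Finset.mem_image_of_mem _ (Finset.mem_univ a)⟩) (k := ka + kb) fun x => by
      simp only [Matrix.sum_apply]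
      rw [Finset.sum_comm, hga, Finset.sum_pair (Ne.symm hba), hka, hkb, Nat.cast_add]
  exact Nat.not_even_iff_odd.2 hodd
    ((hA.odd_valency hskew' hka).add_odd (hA.odd_valency hskew' hkb))

/-- **Main Theorem (Theorem 1.2).** There is no skew-symmetric amorphous
association scheme with at least 4 classes. -/
theorem no_skewSymmetric_amorphous_ge_four_classes
    (d : ℕ) (hd : 4 ≤ d) (n : ℕ) (hn : 1 ≤ n)
    (A : Fin (d + 1) → Matrix (Fin n) (Fin n) ℝ) (σ : Fin (d + 1) → Fin (d + 1))
    (hA : IsAssocScheme n A 0 σ)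
    (hskew : ∀ i, (A i)ᵀ = A i ↔ i = 0) :
    ¬ Amorphous n A 0 σ :=
  no_skewSymmetric_amorphous_ge_four_classes_general d hd n A σ hA hskew
end

section
/- Let G be a connected, non-complete strongly regular graph with parameters (n, k, λ, μ) whose real adjacency matrix has exactly three distinct eigenvalues k, r, s with r ≥ 0 > s, the eigenspaces of r and s having dimensions m_1 and m_2 respectively. If m_1 = m_2, then n = 4μ + 1, k = 2μ, and λ = μ − 1 (that is, G is a conference graph). -/
/-!
Write `A` for the adjacency matrix and `m` for the common multiplicity of `r` and `s`. Counting
the eigenvalues of `A` with multiplicity gives `n = 1 + 2m`, and since `tr A = 0` we get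
`k + m (r + s) = 0`. Multiplying `A² = k I + λ A + μ (J - I - A)` by an eigenvector orthogonal to
the all-ones vector shows that `r` and `s` are the two roots of `x² - (λ - μ) x - (k - μ)`, so
`r + s = λ - μ` and `k = m (μ - λ)`. Since `0 < k ≤ n - 2 = 2m - 1`, this forces `μ - λ = 1` and
`k = m`, i.e. `n = 2k + 1`; the counting identity `k (k - λ - 1) = (n - k - 1) μ` then reads
`k (k - μ) = k μ`, so `k = 2μ`.
-/

open Matrix Module Module.End Finset

theorem Matrix.eigenspace_toLpLin_eq_comap {R n : Type*} [CommRing R] [Fintype n]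
    [DecidableEq n] (A : Matrix n n R) (t : R) :
    eigenspace (toLpLin 2 2 A) t
      = (eigenspace A.mulVecLin t).comap (WithLp.linearEquiv 2 R (n → R)).toLinearMap := by
  ext x
  simp only [Submodule.mem_comap, mem_eigenspace_iff]
  rw [← (WithLp.linearEquiv 2 R (n → R)).injective.eq_iff]
  rfl

theorem Matrix.exists_mulVec_eq_smul_of_mem_spectrum {R n : Type*} [Field R] [Fintype n]
    [DecidableEq n] {A : Matrix n n R} {t : R} (ht : t ∈ spectrum R A) :
    ∃ v ≠ 0, A *ᵥ v = t • v := by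
  rw [← spectrum_toLin', ← hasEigenvalue_iff_mem_spectrum] at ht
  obtain ⟨v, hv, hv0⟩ := ht.exists_hasEigenvector
  exact ⟨v, hv0, mem_eigenspace_iff.mp hv⟩

namespace Matrix.IsHermitian

variable {𝕜 n : Type*} [RCLike 𝕜] [Fintype n] [DecidableEq n] {A : Matrix n n 𝕜}

theorem card_filter_eigenvalues_eq (hA : A.IsHermitian) (t : ℝ) :
    #{i | hA.eigenvalues i = t} = finrank 𝕜 (eigenspace A.mulVecLin (t : 𝕜)) := by
  have hT := isSymmetric_toEuclideanLin_iff.mpr hA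
  calc #{i | hA.eigenvalues i = t}
      = #{j | hT.eigenvalues finrank_euclideanSpace j = t} :=
        card_equiv (Fintype.equivOfCardEq (Fintype.card_fin _)).symm
          (fun _ => by rw [mem_filter_univ, mem_filter_univ]; rfl)
    _ = finrank 𝕜 (eigenspace (toLpLin 2 2 A) (t : 𝕜)) := by
        simpa using hT.card_filter_eigenvalues_eq finrank_euclideanSpace (t : 𝕜)
    _ = finrank 𝕜 (eigenspace A.mulVecLin (t : 𝕜)) := by
        rw [eigenspace_toLpLin_eq_comap, Submodule.comap_equiv_eq_map_symm,
          LinearEquiv.finrank_map_eq]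

theorem card_eq_sum_finrank_eigenspace (hA : A.IsHermitian) {S : Finset ℝ}
    (hS : spectrum ℝ A ⊆ S) :
    Fintype.card n = ∑ t ∈ S, finrank 𝕜 (eigenspace A.mulVecLin (t : 𝕜)) := by
  simp_rw [← hA.card_filter_eigenvalues_eq, ← card_univ]
  exact card_eq_sum_card_fiberwise fun i _ => hS (hA.eigenvalues_mem_spectrum_real i)

theorem trace_eq_sum_finrank_eigenspace_mul (hA : A.IsHermitian) {S : Finset ℝ}
    (hS : spectrum ℝ A ⊆ S) :
    A.trace = ∑ t ∈ S, finrank 𝕜 (eigenspace A.mulVecLin (t : 𝕜)) * (t : 𝕜) := by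
  rw [hA.trace_eq_sum_eigenvalues, ← sum_fiberwise_of_maps_to
    (g := hA.eigenvalues) fun i _ => hS (hA.eigenvalues_mem_spectrum_real i)]
  refine sum_congr rfl fun t _ => ?_
  rw [sum_congr rfl fun i hi => by rw [(mem_filter.1 hi).2], sum_const,
    card_filter_eigenvalues_eq, nsmul_eq_mul]

end Matrix.IsHermitian

namespace SimpleGraph

variable {V R : Type*} [Fintype V] {G : SimpleGraph V} [DecidableRel G.Adj] [Field R]

theorem IsRegularOfDegree.pos_of_ne_bot {d : ℕ} (h : G.IsRegularOfDegree d) (hG : G ≠ ⊥) :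
    0 < d := by
  obtain ⟨a, b, hab⟩ := ne_bot_iff_exists_adj.mp hG
  exact h a ▸ G.degree_pos_iff_exists_adj a |>.mpr ⟨b, hab⟩

theorem IsRegularOfDegree.pos_of_connected [Nontrivial V] {d : ℕ} (h : G.IsRegularOfDegree d)
    (hG : G.Connected) : 0 < d :=
  h.pos_of_ne_bot fun hbot => not_preconnected_bot (hbot ▸ hG.preconnected)

theorem IsRegularOfDegree.add_two_le_card_of_ne_top [DecidableEq V] {d : ℕ}
    (h : G.IsRegularOfDegree d) (hG : G ≠ ⊤) : d + 2 ≤ Fintype.card V := by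
  have := h.compl.pos_of_ne_bot (compl_eq_bot.not.mpr hG)
  omega

theorem IsRegularOfDegree.sum_eq_zero_of_mulVec_eq_smul {d : ℕ} (h : G.IsRegularOfDegree d)
    {t : R} (ht : t ≠ d) {v : V → R} (hv : G.adjMatrix R *ᵥ v = t • v) : ∑ i, v i = 0 := by
  have hone : Function.const V 1 ᵥ* G.adjMatrix R = Function.const V (d : R) := by
    ext i
    simp [adjMatrix_vecMul_apply, h i]
  have key : t * ∑ i, v i = d * ∑ i, v i := calc
    t * ∑ i, v i = Function.const V 1 ⬝ᵥ (G.adjMatrix R *ᵥ v) := by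
      rw [hv]
      simp [dotProduct, mul_sum]
    _ = d * ∑ i, v i := by
      rw [dotProduct_mulVec, hone]
      simp [dotProduct, mul_sum]
  have : (t - d) * ∑ i, v i = 0 := by linear_combination key
  exact (mul_eq_zero.mp this).resolve_left (sub_ne_zero.mpr ht)

theorem compl_adjMatrix_mulVec [DecidableEq V] (v : V → R) :
    Gᶜ.adjMatrix R *ᵥ v = Function.const V (∑ i, v i) - v - G.adjMatrix R *ᵥ v := by
  classical
  have hJ := G.one_add_adjMatrix_add_compl_adjMatrix_eq_of_one R
  rw [compl_adjMatrix_eq_adjMatrix_compl] at hJ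
  rw [show Gᶜ.adjMatrix R = of 1 - 1 - G.adjMatrix R by rw [← hJ]; abel, sub_mulVec, sub_mulVec,
    one_mulVec]
  ext i
  simp [mulVec, dotProduct]

variable {n k ℓ μ : ℕ}

theorem IsSRGWith.sq_eigenvalue_eq (h : G.IsSRGWith n k ℓ μ) {t : R} (ht : t ≠ k) {v : V → R}
    (hv0 : v ≠ 0) (hv : G.adjMatrix R *ᵥ v = t • v) : t ^ 2 = (ℓ - μ) * t + (k - μ) := by
  classical
  have hsum := h.regular.sum_eq_zero_of_mulVec_eq_smul ht hv
  have hcompl : Gᶜ.adjMatrix R *ᵥ v = -(1 + t) • v := by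
    rw [compl_adjMatrix_mulVec, hsum, hv, Function.const_zero]
    module
  have hsq : G.adjMatrix R ^ 2 *ᵥ v = t ^ 2 • v := by
    rw [sq, ← mulVec_mulVec, hv, mulVec_smul, hv, smul_smul, sq]
  have key := congrArg (· *ᵥ v) h.matrix_eq
  simp only [add_mulVec, smul_mulVec, one_mulVec, hv, hcompl, hsq] at key
  have : (t ^ 2 - ((ℓ - μ) * t + (k - μ))) • v = 0 := by
    rw [sub_smul, key]
    module
  exact sub_eq_zero.mp ((smul_eq_zero.mp this).resolve_right hv0)

theorem IsSRGWith.add_eigenvalues_eq [DecidableEq V] (h : G.IsSRGWith n k ℓ μ) {r s : R}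
    (hrs : r ≠ s) (hkr : (k : R) ≠ r) (hks : (k : R) ≠ s) (hr : r ∈ spectrum R (G.adjMatrix R))
    (hs : s ∈ spectrum R (G.adjMatrix R)) : r + s = ℓ - μ := by
  obtain ⟨v, hv0, hv⟩ := exists_mulVec_eq_smul_of_mem_spectrum hr
  obtain ⟨w, hw0, hw⟩ := exists_mulVec_eq_smul_of_mem_spectrum hs
  have hqr := h.sq_eigenvalue_eq hkr.symm hv0 hv
  have hqs := h.sq_eigenvalue_eq hks.symm hw0 hw
  have : (r - s) * (r + s - (ℓ - μ)) = 0 := by linear_combination hqr - hqs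
  exact sub_eq_zero.mp ((mul_eq_zero.mp this).resolve_left (sub_ne_zero.mpr hrs))

theorem IsSRGWith.conference_params_of_degree_eq_mul (h : G.IsSRGWith n k ℓ μ) {m : ℕ}
    (hk : 0 < k) (hkn : k + 2 ≤ n) (hn : n = 2 * m + 1) (hkm : (k : ℤ) = m * (μ - ℓ)) :
    n = 4 * μ + 1 ∧ k = 2 * μ ∧ μ = ℓ + 1 := by
  have hμ : (μ : ℤ) - ℓ = 1 := by
    have : (0 : ℤ) < μ - ℓ := pos_of_mul_pos_right (hkm ▸ Int.natCast_pos.mpr hk) (by positivity)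
    have : (μ : ℤ) - ℓ < 2 := by nlinarith [Int.natCast_nonneg m]
    omega
  rw [hμ, mul_one] at hkm
  have hpe := h.param_eq G (by omega)
  rw [show k - ℓ - 1 = k - μ by omega, show n - k - 1 = k by omega] at hpe
  have := Nat.eq_of_mul_eq_mul_left hk hpe
  omega

end SimpleGraph

open SimpleGraph in
/-- A connected, non-complete strongly regular graph whose adjacency matrix has
exactly three distinct real eigenvalues `k, r, s` (`r ≥ 0 > s`) with eigenspace
dimensions `1, m₁, m₂`: if `m₁ = m₂` then `n = 4μ + 1`, `k = 2μ` and
`λ = μ - 1`, i.e. the graph is a conference graph. -/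
theorem srg_equal_multiplicities_is_conference_graph
    (n k l μ : ℕ) (G : SimpleGraph (Fin n)) [DecidableRel G.Adj]
    (hsrg : G.IsSRGWith n k l μ) (hconn : G.Connected) (hnc : G ≠ ⊤)
    (r s : ℝ) (m₁ m₂ : ℕ)
    (hr : 0 ≤ r) (hs : s < 0)
    (hspec : spectrum ℝ (G.adjMatrix ℝ) = {(k : ℝ), r, s})
    (hkr : (k : ℝ) ≠ r) (hks : (k : ℝ) ≠ s)
    (hdimk : Module.finrank ℝ
      (Module.End.eigenspace (G.adjMatrix ℝ).mulVecLin (k : ℝ)) = 1)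
    (hdimr : Module.finrank ℝ
      (Module.End.eigenspace (G.adjMatrix ℝ).mulVecLin r) = m₁)
    (hdims : Module.finrank ℝ
      (Module.End.eigenspace (G.adjMatrix ℝ).mulVecLin s) = m₂)
    (heq : m₁ = m₂) :
    (n : ℝ) = 4 * μ + 1 ∧ (k : ℝ) = 2 * μ ∧ (l : ℝ) = (μ : ℝ) - 1 := by
  subst heq
  have hrs : r ≠ s := (hs.trans_le hr).ne'
  have hA := G.isHermitian_adjMatrix ℝ
  have hS : spectrum ℝ (G.adjMatrix ℝ) ⊆ ({(k : ℝ), r, s} : Finset ℝ) := by simp [hspec]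
  have hkrs : (k : ℝ) ∉ ({r, s} : Finset ℝ) := by simp [hkr, hks]
  have hcard := hA.card_eq_sum_finrank_eigenspace hS
  have htrace := hA.trace_eq_sum_finrank_eigenspace_mul hS
  simp only [sum_insert hkrs, sum_pair hrs, RCLike.ofReal_real_eq_id, id, Nat.cast_one, one_mul,
    hdimk, hdimr, hdims, Fintype.card_fin, trace_adjMatrix] at hcard htrace
  have hvieta := hsrg.add_eigenvalues_eq hrs hkr hks (by simp [hspec]) (by simp [hspec])
  have hkn : k + 2 ≤ n := by simpa using hsrg.regular.add_two_le_card_of_ne_top hnc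
  have : Nontrivial (Fin n) := Fin.nontrivial_iff_two_le.mpr (by omega)
  have hkm : (k : ℤ) = m₁ * (μ - l) := by
    have : (k : ℝ) = m₁ * (μ - l) := by linear_combination -htrace - m₁ * hvieta
    exact_mod_cast this
  obtain ⟨hn, hk, hμ⟩ := hsrg.conference_params_of_degree_eq_mul
    (hsrg.regular.pos_of_connected hconn) hkn (by omega) hkm
  exact ⟨by exact_mod_cast hn, by exact_mod_cast hk, by rw [hμ]; push_cast; ring⟩
end

section
/- Let A_0 = I, A_1, A_2 = A_1ᵀ be a non-symmetric association scheme with 2 classes on n vertices (equivalently, A_1 is the adjacency matrix of a doubly regular tournament), and let k be the constant row sum of A_1. Then n = 2k + 1 and the set of complex eigenvalues of the complexification of A_1 is exactly {k, (−1 + i·√n)/2, (−1 − i·√n)/2}. -/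
open Matrix BigOperators

/-!
Write `T = A₁`. The scheme axioms give `1 + T + Tᵀ = J` and `T² = p₀ + aT + bTᵀ`, and `p₀ = 0`
because `T` and `T²` have zero diagonal. Counting the ones of `T` by rows and by columns gives
`n = 2k + 1`, so the column sums of `T` are `k` as well. The matrix `T + T² = kJ - TTᵀ` is
symmetric while `T` is not, which forces `b = a + 1`; multiplying by `J` gives `a + b = k`. Hence
`T² + T + c = cJ` with `c = (k + 1)/2 = (n + 1)/4`, and `T` is annihilated by
`(X - k)(X² + X + c)`, whose roots are `k` and `(-1 ± i√n)/2`.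
-/

open Polynomial

local notation "𝐉" => Matrix.of fun _ _ => 1

section Spectrum

variable {K A : Type*} [Field K] [Ring A] [Algebra K A] {a : A}

theorem spectrum.isRoot_of_aeval_eq_zero [Nontrivial A] {p : K[X]} (hp : aeval a p = 0)
    {μ : K} (hμ : μ ∈ spectrum K a) : p.IsRoot μ := by
  simpa [hp, spectrum.zero_eq] using spectrum.subset_polynomial_aeval a p ⟨μ, hμ, rfl⟩

theorem spectrum.mem_of_aeval_mul_X_sub_C_eq_zero {p : K[X]} {z : K} (hp : aeval a p ≠ 0)
    (h : aeval a (p * (X - C z)) = 0) : z ∈ spectrum K a := by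
  intro hz
  have hunit : IsUnit (a - algebraMap K A z) := by simpa using hz.neg
  rw [aeval_mul, map_sub, aeval_X, aeval_C, hunit.mul_left_eq_zero] at h
  exact hp h

end Spectrum

theorem Matrix.mul_allOnes_of_sum_row {m n o R : Type*} [Fintype n] [NonAssocSemiring R]
    {M : Matrix m n R} {k : R} (hk : ∀ i, ∑ j, M i j = k) : M * (𝐉 : Matrix n o R) = k • 𝐉 := by
  ext i l
  simp [mul_apply, hk]

section MatrixPolynomial

variable {ι : Type*} [Fintype ι] [DecidableEq ι]

theorem Matrix.aeval_map {R S : Type*} [CommRing R] [CommRing S] (f : R →+* S)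
    (M : Matrix ι ι R) (p : R[X]) : aeval (M.map f) (p.map f) = (aeval M p).map f :=
  (map_aeval_eq_aeval_map (ψ := f.mapMatrix) (RingHom.ext fun r => by
    ext i j; simp [algebraMap_eq_diagonal, diagonal_apply, apply_ite f]) p M).symm

theorem Matrix.aeval_X_sub_C_mul_X_sub_C_ne_zero [Nonempty ι] {R : Type*} [CommRing R]
    {M : Matrix ι ι R} (hM : ∀ i, M i i = 0) (hM2 : ∀ i, (M * M) i i = 0) {x y : R}
    (hxy : x * y ≠ 0) : aeval M ((X - C x) * (X - C y)) ≠ 0 := by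
  intro h
  obtain ⟨i⟩ := ‹Nonempty ι›
  have hii := congrFun (congrFun h i) i
  simp [sub_mul, mul_sub, algebraMap_eq_diagonal, hM, hM2] at hii
  exact hxy hii

/-- If a root were missing from the spectrum, its factor would be invertible, so the product of
the other two factors would already vanish at `M`, which its diagonal rules out. -/
theorem Matrix.spectrum_eq_of_aeval_eq_zero_of_diag_eq_zero [Nonempty ι] {K : Type*} [Field K]
    {M : Matrix ι ι K} (hM : ∀ i, M i i = 0) (hM2 : ∀ i, (M * M) i i = 0) {x y z : K}
    (h : aeval M ((X - C x) * (X - C y) * (X - C z)) = 0)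
    (hxy : x * y ≠ 0) (hxz : x * z ≠ 0) (hyz : y * z ≠ 0) :
    spectrum K M = {x, y, z} := by
  have hne {u v : K} (huv : u * v ≠ 0) := aeval_X_sub_C_mul_X_sub_C_ne_zero hM hM2 huv
  refine subset_antisymm (fun μ hμ => ?_) ?_
  · have hroot := spectrum.isRoot_of_aeval_eq_zero h hμ
    simp only [IsRoot, eval_mul, eval_sub, eval_X, eval_C, mul_eq_zero, sub_eq_zero] at hroot
    simp only [Set.mem_insert_iff, Set.mem_singleton_iff]
    tauto
  · simp only [Set.insert_subset_iff, Set.singleton_subset_iff]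
    refine ⟨spectrum.mem_of_aeval_mul_X_sub_C_eq_zero (hne hyz) ?_,
      spectrum.mem_of_aeval_mul_X_sub_C_eq_zero (hne hxz) ?_,
      spectrum.mem_of_aeval_mul_X_sub_C_eq_zero (hne hxy) h⟩
    · rwa [show (X - C y) * (X - C z) * (X - C x) = (X - C x) * (X - C y) * (X - C z) by ring]
    · rwa [show (X - C x) * (X - C z) * (X - C y) = (X - C x) * (X - C y) * (X - C z) by ring]

theorem Matrix.aeval_X_sub_C_mul_eq_zero_of_mul_self_add_self {R : Type*} [CommRing R]
    {M : Matrix ι ι R} {k c : R} (hk : ∀ i, ∑ j, M i j = k) (h : M * M + M + c • 1 = c • 𝐉) :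
    aeval M ((X - C k) * (X ^ 2 + X + C c)) = 0 := by
  simp only [map_mul, map_add, map_sub, aeval_X, aeval_C, Algebra.algebraMap_eq_smul_one,
    sq, h, Matrix.mul_smul, sub_mul, smul_mul, Matrix.one_mul, mul_allOnes_of_sum_row hk]
  module

end MatrixPolynomial

theorem Polynomial.X_sq_add_X_add_C_eq_mul {n : ℝ} (hn : 0 ≤ n) :
    (X ^ 2 + X + C (((n : ℂ) + 1) / 4) : ℂ[X]) =
      (X - C ((-1 + Complex.I * (√n : ℝ)) / 2)) * (X - C ((-1 - Complex.I * (√n : ℝ)) / 2)) := by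
  set l₁ : ℂ := (-1 + Complex.I * (√n : ℝ)) / 2
  set l₂ : ℂ := (-1 - Complex.I * (√n : ℝ)) / 2
  have hsum : l₁ + l₂ = -1 := by ring
  have hprod : l₁ * l₂ = (n + 1) / 4 := by
    have hsq : ((√n : ℝ) : ℂ) ^ 2 = n := by norm_cast; exact Real.sq_sqrt hn
    linear_combination (-1 / 4 : ℂ) * ((√n : ℝ) : ℂ) ^ 2 * Complex.I_sq + (1 / 4 : ℂ) * hsq
  calc _ = X ^ 2 - C (l₁ + l₂) * X + C (l₁ * l₂) := by rw [hsum, hprod, C_neg, C_1]; ring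
    _ = _ := by rw [C_add, C_mul]; ring

theorem Matrix.nonempty_of_ne_transpose {ι R : Type*} {M : Matrix ι ι R} (hM : M ≠ Mᵀ) :
    Nonempty ι := by
  by_contra h
  exact hM (ext fun i => (not_nonempty_iff.mp h).elim i)

structure Matrix.IsTournament {ι : Type*} [DecidableEq ι] (T : Matrix ι ι ℝ) : Prop where
  zero_or_one : ∀ i j, T i j = 0 ∨ T i j = 1
  one_add_add_transpose : 1 + T + Tᵀ = 𝐉

namespace Matrix.IsTournament

variable {ι : Type*} [DecidableEq ι] {T : Matrix ι ι ℝ} {k : ℝ}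

theorem transpose_eq (hT : T.IsTournament) : Tᵀ = 𝐉 - 1 - T := by
  rw [← hT.one_add_add_transpose]; abel

theorem diag_eq_zero (hT : T.IsTournament) (i : ι) : T i i = 0 := by
  have hii := congrFun (congrFun hT.one_add_add_transpose i) i
  simp at hii
  linarith

variable [Fintype ι]

theorem mul_self_diag_eq_zero (hT : T.IsTournament) (i : ι) : (T * T) i i = 0 := by
  refine Finset.sum_eq_zero fun j _ => ?_
  have hij := congrFun (congrFun hT.one_add_add_transpose i) j
  rcases eq_or_ne i j with rfl | hne
  · simp [hT.diag_eq_zero i]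
  · rcases hT.zero_or_one i j with h | h <;> simp_all [one_apply_ne hne]

theorem sum_col_eq (hT : T.IsTournament) (hk : ∀ i, ∑ j, T i j = k) (j : ι) :
    ∑ i, T i j = Fintype.card ι - 1 - k := by
  change ∑ i, Tᵀ j i = _
  rw [hT.transpose_eq]
  simp [Finset.sum_sub_distrib, hk, one_apply]

theorem card_eq_two_mul_add_one [Nonempty ι] (hT : T.IsTournament) (hk : ∀ i, ∑ j, T i j = k) :
    (Fintype.card ι : ℝ) = 2 * k + 1 := by
  have hcount : ∑ i, ∑ j, T i j = ∑ j, ∑ i, T i j := Finset.sum_comm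
  simp only [hk, hT.sum_col_eq hk, Finset.sum_const, Finset.card_univ, nsmul_eq_mul] at hcount
  have hpos : (0 : ℝ) < Fintype.card ι := by exact_mod_cast Fintype.card_pos
  nlinarith

theorem sum_col_eq_of_sum_row (hT : T.IsTournament) (hk : ∀ i, ∑ j, T i j = k) (j : ι) :
    ∑ i, T i j = k := by
  have : Nonempty ι := ⟨j⟩
  rw [hT.sum_col_eq hk, hT.card_eq_two_mul_add_one hk]
  ring

theorem ne_zero_of_ne_transpose (hT : T.IsTournament) (hk : ∀ i, ∑ j, T i j = k)
    (hns : T ≠ Tᵀ) : k ≠ 0 := by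
  rintro rfl
  have : Nonempty ι := nonempty_of_ne_transpose hns
  have hcard : (Fintype.card ι : ℝ) = 1 := by simpa using hT.card_eq_two_mul_add_one hk
  have : Subsingleton ι := Fintype.card_le_one_iff_subsingleton.mp (by exact_mod_cast hcard.le)
  exact hns (ext fun i j => by rw [Subsingleton.elim i j, transpose_apply])

theorem transpose_add_mul_self (hT : T.IsTournament) (hk : ∀ i, ∑ j, T i j = k) :
    (T + T * T)ᵀ = T + T * T := by
  have hTT : T + T * T = k • 𝐉 - T * Tᵀ := by
    rw [eq_sub_iff_add_eq, ← mul_allOnes_of_sum_row hk, ← hT.one_add_add_transpose]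
    noncomm_ring
  rw [hTT, transpose_sub, transpose_smul, transpose_mul, transpose_transpose]
  rfl

theorem mul_self_add_self_add_smul_one_eq (hT : T.IsTournament) (hk : ∀ i, ∑ j, T i j = k)
    (hns : T ≠ Tᵀ) {p a b : ℝ} (h : T * T = p • 1 + a • T + b • Tᵀ) :
    T * T + T + ((k + 1) / 2) • 1 = ((k + 1) / 2) • 𝐉 := by
  obtain ⟨i⟩ := nonempty_of_ne_transpose hns
  have hp : p = 0 := by
    simpa [hT.mul_self_diag_eq_zero, hT.diag_eq_zero] using (congrFun (congrFun h i) i).symm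
  have hba : b = a + 1 := by
    have hsymm := hT.transpose_add_mul_self hk
    rw [h, hp] at hsymm
    have hcomm : (1 + a - b) • (T - Tᵀ) = 0 := by
      simp only [zero_smul, zero_add, transpose_add, transpose_smul, transpose_transpose] at hsymm
      rw [← sub_eq_zero] at hsymm
      rw [← neg_eq_zero, ← hsymm]
      module
    rcases smul_eq_zero.mp hcomm with hc | hc
    · linarith
    · exact absurd (sub_eq_zero.mp hc) hns
  have hab : a + b = k := by
    have hJ := congrArg (· * (𝐉 : Matrix ι ι ℝ)) h
    simp only [add_mul, smul_mul, Matrix.mul_assoc, Matrix.mul_smul, hp, zero_smul, zero_add,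
      mul_allOnes_of_sum_row hk, mul_allOnes_of_sum_row (M := Tᵀ) (hT.sum_col_eq_of_sum_row hk)]
      at hJ
    have hii := congrFun (congrFun hJ i) i
    simp only [smul_apply, of_apply, smul_eq_mul, mul_one, add_apply] at hii
    exact mul_right_cancel₀ (hT.ne_zero_of_ne_transpose hk hns) (by linarith)
  rw [h, hT.transpose_eq, hp, show b = (k + 1) / 2 by linarith, show a = (k - 1) / 2 by linarith]
  module

theorem spectrum_map_ofReal_eq (hT : T.IsTournament) (hk : ∀ i, ∑ j, T i j = k)
    (hns : T ≠ Tᵀ) {p a b : ℝ} (h : T * T = p • 1 + a • T + b • Tᵀ) :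
    spectrum ℂ (T.map Complex.ofReal) =
      {(k : ℂ), (-1 + Complex.I * (√(Fintype.card ι) : ℝ)) / 2,
        (-1 - Complex.I * (√(Fintype.card ι) : ℝ)) / 2} := by
  have : Nonempty ι := nonempty_of_ne_transpose hns
  have hcubic : ((X - C k) * (X ^ 2 + X + C ((k + 1) / 2))).map Complex.ofRealHom =
      (X - C (k : ℂ)) * (X - C ((-1 + Complex.I * (√(Fintype.card ι) : ℝ)) / 2)) *
        (X - C ((-1 - Complex.I * (√(Fintype.card ι) : ℝ)) / 2)) := by
    rw [mul_assoc, ← X_sq_add_X_add_C_eq_mul (Nat.cast_nonneg _), hT.card_eq_two_mul_add_one hk,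
      show (((2 * k + 1 : ℝ) : ℂ) + 1) / 4 = ((k + 1) / 2 : ℝ) by push_cast; ring]
    simp
  have hk0 : (k : ℂ) ≠ 0 := by exact_mod_cast hT.ne_zero_of_ne_transpose hk hns
  have hroot_ne_zero {s : ℂ} (hs : s.re = -1 / 2) : s ≠ 0 := by rintro rfl; norm_num at hs
  refine spectrum_eq_of_aeval_eq_zero_of_diag_eq_zero (fun i => ?_) (fun i => ?_) ?_
    (mul_ne_zero hk0 (hroot_ne_zero ?_)) (mul_ne_zero hk0 (hroot_ne_zero ?_))
    (mul_ne_zero (hroot_ne_zero ?_) (hroot_ne_zero ?_))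
  · simp [hT.diag_eq_zero]
  · change (T.map Complex.ofRealHom * T.map Complex.ofRealHom) i i = 0
    rw [← Matrix.map_mul]
    simp [hT.mul_self_diag_eq_zero]
  · rw [← hcubic]
    exact (aeval_map Complex.ofRealHom T _).trans
      (by simp [aeval_X_sub_C_mul_eq_zero_of_mul_self_add_self hk
        (hT.mul_self_add_self_add_smul_one_eq hk hns h)])
  all_goals simp

end Matrix.IsTournament

/-- A non-symmetric association scheme with 2 classes (equivalently, a doubly
regular tournament) has `n = 2k + 1` vertices, and the complex eigenvalues of
`A₁` are exactly `k, (-1 + i√n)/2, (-1 - i√n)/2`. -/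
theorem two_class_nonsymmetric_eigenvalues
    (n : ℕ)
    (A : Fin 3 → Matrix (Fin n) (Fin n) ℝ) (σ : Fin 3 → Fin 3)
    (hA : IsAssocScheme n A 0 σ)
    (h12 : A 2 = (A 1)ᵀ)
    (hns : A 1 ≠ (A 1)ᵀ)
    (k : ℝ) (hk : ∀ x, ∑ y, A 1 x y = k) :
    (n : ℝ) = 2 * k + 1 ∧
    spectrum ℂ ((A 1).map Complex.ofReal) =
      {(k : ℂ), (-1 + Complex.I * (Real.sqrt n : ℝ)) / 2,
        (-1 - Complex.I * (Real.sqrt n : ℝ)) / 2} := by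
  obtain ⟨-, h01, he, hsum, -, hprod⟩ := hA
  have hT : (A 1).IsTournament := ⟨h01 1, by simpa [Fin.sum_univ_three, he, h12] using hsum⟩
  obtain ⟨p, hp⟩ := hprod 1 1
  rw [Fin.sum_univ_three, he, h12] at hp
  have : Nonempty (Fin n) := nonempty_of_ne_transpose hns
  refine ⟨by simpa using hT.card_eq_two_mul_add_one hk, ?_⟩
  simpa using hT.spectrum_map_ofReal_eq hk hns hp
end
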